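/- Monotonicity of HPSLD provability: if ⟨← G, Π⟩ ⇝* ⟨□, Π⟩ (the goal G succeeds in program Π) then ⟨← G, Π ∪ {R}⟩ ⇝* ⟨□, Π ∪ {R}⟩ for any additional rule R (goals remain provable when hypotheses are added). -/
import Mathlib


mutual
  /-- Body items of rules: either a propositional letter or an embedded
  implication `R ⇒ A`. -/
  inductive HQ (α : Type) : Type
    | atom (a : α) : HQ α
    | impl (R : HRule α) (a : α) : HQ α
  /-- A propositional rule `A ← Q₁ ∧ ... ∧ Qₙ` (a fact when the body is empty). -/
  inductive HRule (α : Type) : Type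
    | mk (head : α) (body : List (HQ α)) : HRule α
end

/-- HPSLD resolution: `HPSLD G₁ P₁ G₂ P₂` means `⟨G₁, P₁⟩ ⇝* ⟨G₂, P₂⟩`.
Goals are (conjunctive) lists of body items; `[]` is the empty goal `□`.
Rule 1 resolves an atom against a program rule; Rule 2 solves an embedded
implication `R ⇒ A` by a successful derivation of `← A` in `P ∪ {R}`. -/
inductive HPSLD {α : Type} : List (HQ α) → Set (HRule α) → List (HQ α) → Set (HRule α) → Prop
  | refl (G : List (HQ α)) (P : Set (HRule α)) : HPSLD G P G P
  | rule1 {A : α} {B Q' G2 : List (HQ α)} {P P2 : Set (HRule α)}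
      (hmem : HRule.mk A B ∈ P)
      (hrest : HPSLD (B ++ Q') P G2 P2) :
      HPSLD (HQ.atom A :: Q') P G2 P2
  | rule2 {R : HRule α} {A : α} {Q' G2 : List (HQ α)} {P P2 : Set (HRule α)}
      (hhyp : HPSLD [HQ.atom A] (insert R P) [] (insert R P))
      (hrest : HPSLD Q' P G2 P2) :
      HPSLD (HQ.impl R A :: Q') P G2 P2


theorem hpsld_insert {α : Type} {G G2 : List (HQ α)} {P P2 : Set (HRule α)} (R : HRule α)
    (h : HPSLD G P G2 P2) : HPSLD G (insert R P) G2 (insert R P2) := by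
  induction h with
  | refl G P => exact HPSLD.refl G (insert R P)
  | rule1 hmem hrest ih => exact HPSLD.rule1 (Set.mem_insert_of_mem R hmem) ih
  | rule2 hhyp hrest ih1 ih2 =>
      exact HPSLD.rule2 (Set.insert_comm _ _ _ ▸ ih1) ih2

/-- Monotonicity of HPSLD provability: a goal that succeeds in `P` still
succeeds after adding any hypothesis `R`. -/
theorem hpsld_monotone {α : Type} (P : Set (HRule α)) (G : List (HQ α)) (R : HRule α)
    (h : HPSLD G P [] P) :
    HPSLD G (insert R P) [] (insert R P) := hpsld_insert R h
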